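/- Two selfish miners can profit with Hashrates strictly below the single-attacker 25% threshold of Eyal and Sirer: with γ = 1/2, the single-attacker Eyal–Sirer relative revenue satisfies R_ES(0.22, 1/2) < 0.22, whereas in the N=4 selfish-mining model with γ1 = γ2 = 1/2, θ1 = θ2 = 1/3 and α1 = α2 = 0.22 one has R_A⁴ > 0.22. -/
import Mathlib


/-- N=4 selfish-mining model: Alice's (unnormalized) revenue polynomial S1. -/
noncomputable def S1N4 (a1 a2 g1 g2 t1 t2 : ℝ) : ℝ :=
  let h := 1 - a1 - a2
  let b1 := g1 / (g1 + g2)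
  4*a1^4*(1+h) + 3*a1^3*h^2 + 16*a1^4*a2 + 4*a1^2*h + 40*a1^4*a2^2*(1+2*a2)
  + a1*a2*h*(1+g1+2*t1*h) + 10*a1^2*a2*h + 20*a1^3*a2*h*(3*a2+a1) + 15*a1^3*a2*h^2
  + 4*a1^4*a2^2*h*(1+h) + 4*a1^4*a2^3*h^2*(b1+20) + 5*a1^5*a2^3*h
  + 4*a1^4*a2^3*h*(a2+21) + 3*a1^3*a2^4*h^2*b1 + a1*h^2*g1 + 12*a1^2*a2^2*h^2*b1
  + a1^2*a2^2*h^3*b1*(3*a1+2*a2) + 6*a1^3*a2^3*h^2*(10*h*b1+1)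

/-- N=4 selfish-mining model: Bob's (unnormalized) revenue polynomial S2. -/
noncomputable def S2N4 (a1 a2 g1 g2 t1 t2 : ℝ) : ℝ :=
  let h := 1 - a1 - a2
  let b2 := g2 / (g1 + g2)
  4*a2^4*(1+h) + 3*a2^3*h^2 + 16*a1*a2^4 + 4*a2^2*h + 40*a1^2*a2^4*(1+2*a1)
  + a1*a2*h*(1+g2+2*t2*h) + 10*a1*a2^2*h + 20*a1*a2^3*h*(3*a1+a2) + 15*a1*a2^3*h^2
  + 4*a1^2*a2^4*h*(1+h) + 4*a1^3*a2^4*h^2*(b2+20) + 5*a1^3*a2^5*h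
  + 4*a1^3*a2^4*h*(a1+21) + 3*a1^4*a2^3*h^2*b2 + a2*h^2*g2 + 12*a1^2*a2^2*h^2*b2
  + a1^2*a2^2*h^3*b2*(2*a1+3*a2) + 6*a1^3*a2^3*h^2*(10*h*b2+1)

/-- N=4 selfish-mining model: Henry's (unnormalized) revenue polynomial Sh. -/
noncomputable def ShN4 (a1 a2 g1 g2 t1 t2 : ℝ) : ℝ :=
  let h := 1 - a1 - a2
  let b1 := g1 / (g1 + g2)
  let b2 := g2 / (g1 + g2)
  h + a1*h^2*(2-g1) + a2*h^2*(2-g2) + 2*a1*a2*h^2*(2-t1-t2) + a1*a2*h*(2-g1-g2)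
  + a1^2*a2^2*h^2*(6+4*a1*a2) + a1^2*a2^3*h^3*(2*b1+b2) + a1^3*a2^2*h^3*(b1+2*b2)
  + a1^3*a2^3*h*(a1+a2) + a1^3*a2^4*h^2*(2*b1+b2) + a1^4*a2^3*h^2*(b1+2*b2)
  + 20*a1^3*a2^3*h^3 + 2*a1^4*a2^4*h

/-- N=4 model: Alice's relative revenue R_A⁴. -/
noncomputable def RA4 (a1 a2 g1 g2 t1 t2 : ℝ) : ℝ :=
  S1N4 a1 a2 g1 g2 t1 t2 /
    (S1N4 a1 a2 g1 g2 t1 t2 + S2N4 a1 a2 g1 g2 t1 t2 + ShN4 a1 a2 g1 g2 t1 t2)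

/-- N=4 model: Bob's relative revenue R_B⁴. -/
noncomputable def RB4 (a1 a2 g1 g2 t1 t2 : ℝ) : ℝ :=
  S2N4 a1 a2 g1 g2 t1 t2 /
    (S1N4 a1 a2 g1 g2 t1 t2 + S2N4 a1 a2 g1 g2 t1 t2 + ShN4 a1 a2 g1 g2 t1 t2)

/-- Eyal–Sirer single-attacker relative revenue with Hashrate α and tie-breaking γ. -/
noncomputable def RES (α γ : ℝ) : ℝ :=
  (α*(1-α)^2*(4*α + γ*(1-2*α)) - α^3) / (1 - α*(1 + (2-α)*α))

/-- Two selfish miners can profit below the single-attacker 25% threshold: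
with γ = 1/2 a lone attacker with Hashrate 0.22 is unprofitable, but in the
N=4 two-attacker model with α1 = α2 = 0.22 Alice is profitable. -/
theorem two_attackers_beat_eyal_sirer_threshold :
    RES 0.22 (1/2) < 0.22 ∧
    RA4 0.22 0.22 (1/2) (1/2) (1/3) (1/3) > 0.22 := by
  constructor
  · unfold RES
    rw [div_lt_iff₀ (by norm_num)]
    norm_num
  · unfold RA4 S1N4 S2N4 ShN4
    rw [gt_iff_lt, lt_div_iff₀ (by norm_num)]
    norm_num
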